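/- Composition rule for sections with nilpotents (Proposition 3, scalar check): Let n₁, n₂ > 0, let f₁, f₂ be entire functions, and let N₁ ∈ End(V₁), N₂ ∈ End(V₂) be nilpotent. With the formal translation notation f(z+N) := Σ_k f^{(k)}(z) Nᵏ/k!, one has exp(DN₁/n₁)f₁ · exp(DN₂/n₂)f₂ = exp(D(N₁+N₂)/(n₁+n₂)) [ f₁(z + (n₁N₂−n₂N₁)/(2πi n₁(n₁+n₂))) · f₂(z + (n₂N₁−n₁N₂)/(2πi n₂(n₁+n₂))) ], as End(V₁⊗V₂)-valued entire functions, where D = −(1/(2πi)) d/dz and N₁, N₂ act as N₁⊗1 and 1⊗N₂. -/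

import Mathlib

open Complex Matrix
open scoped Kronecker

attribute [local instance] Matrix.linftyOpNormedRing Matrix.linftyOpNormedAlgebra

/-- The differential operator `D = −(1/(2πi)) d/dz` on functions valued in a complex
normed space. -/
noncomputable def DopA {A : Type*} [NormedAddCommGroup A] [NormedSpace ℂ A]
    (f : ℂ → A) : ℂ → A :=
  fun z => (-(1 / (2 * (Real.pi : ℂ) * Complex.I))) • deriv f z

/-- `exp(DM/n)` applied to an operator-valued function:
`Σ_k (1/(k! nᵏ)) Dᵏg(z)·Mᵏ`. -/
noncomputable def expD {A : Type*} [NormedRing A] [NormedAlgebra ℂ A]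
    (n : ℂ) (M : A) (g : ℂ → A) (z : ℂ) : A :=
  ∑' k : ℕ, ((1 : ℂ) / ((k.factorial : ℂ) * n ^ k)) • (DopA^[k] g z * M ^ k)

/-- The formal Taylor shift `f(z+T) = Σ_k f⁽ᵏ⁾(z) Tᵏ/k!` of a scalar entire function by
an operator `T`. -/
noncomputable def shiftF {A : Type*} [NormedRing A] [NormedAlgebra ℂ A]
    (f : ℂ → ℂ) (T : A) (z : ℂ) : A :=
  ∑' k : ℕ, ((iteratedDeriv k f z) / (k.factorial : ℂ)) • T ^ k

section Helpers

open Finset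

lemma entire_deriv {E : Type*} [NormedAddCommGroup E] [NormedSpace ℂ E] [CompleteSpace E]
    {f : ℂ → E} (hf : Differentiable ℂ f) : Differentiable ℂ (deriv f) :=
  ((contDiff_infty_iff_deriv.mp hf.contDiff).2).differentiable (by simp)

lemma entire_iteratedDeriv {E : Type*} [NormedAddCommGroup E] [NormedSpace ℂ E] [CompleteSpace E]
    {f : ℂ → E} (hf : Differentiable ℂ f) (k : ℕ) :
    Differentiable ℂ (iteratedDeriv k f) := by
  induction k with
  | zero => simpa using hf
  | succ k ih => rw [iteratedDeriv_succ]; exact entire_deriv ih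

lemma iteratedDeriv_iteratedDeriv' {E : Type*} [NormedAddCommGroup E] [NormedSpace ℂ E]
    {f : ℂ → E} (j k : ℕ) :
    iteratedDeriv j (iteratedDeriv k f) = iteratedDeriv (j + k) f := by
  simp [iteratedDeriv_eq_iterate, ← Function.iterate_add_apply]

lemma leibniz_entire {f g : ℂ → ℂ} (hf : Differentiable ℂ f) (hg : Differentiable ℂ g) (m : ℕ) :
    iteratedDeriv m (fun w => f w * g w) =
      fun z => ∑ i ∈ range (m + 1),
        (m.choose i : ℂ) * (iteratedDeriv i f z * iteratedDeriv (m - i) g z) := by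
  induction m with
  | zero => simp
  | succ m ih =>
    rw [iteratedDeriv_succ, ih]
    funext z
    rw [deriv_fun_sum (fun i _ => show DifferentiableAt ℂ (fun z => (m.choose i : ℂ) *
        (iteratedDeriv i f z * iteratedDeriv (m - i) g z)) z from
      (((entire_iteratedDeriv hf i).mul (entire_iteratedDeriv hg (m - i))).const_mul
        ((m.choose i : ℂ))).differentiableAt)]
    have hstep : ∀ i ∈ range (m + 1),
        deriv (fun z => (m.choose i : ℂ) *
          (iteratedDeriv i f z * iteratedDeriv (m - i) g z)) z =
        (m.choose i : ℂ) * (iteratedDeriv (i+1) f z * iteratedDeriv (m - i) g z)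
          + (m.choose i : ℂ) * (iteratedDeriv i f z * iteratedDeriv (m - i + 1) g z) := by
      intro i _
      rw [deriv_const_mul _ (show DifferentiableAt ℂ (fun z => iteratedDeriv i f z *
            iteratedDeriv (m - i) g z) z from ((entire_iteratedDeriv hf i).mul
            (entire_iteratedDeriv hg (m - i))).differentiableAt),
          deriv_fun_mul ((entire_iteratedDeriv hf i).differentiableAt)
            ((entire_iteratedDeriv hg (m - i)).differentiableAt),
          ← iteratedDeriv_succ, ← iteratedDeriv_succ]
      ring
    rw [Finset.sum_congr rfl hstep, Finset.sum_add_distrib]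
    set T : ℕ → ℂ := fun i => iteratedDeriv i f z * iteratedDeriv (m + 1 - i) g z with hT
    have e1 : ∀ i ∈ range (m + 1),
        (m.choose i : ℂ) * (iteratedDeriv (i+1) f z * iteratedDeriv (m - i) g z)
          = (m.choose i : ℂ) * T (i + 1) := by
      intro i hi
      have : m - i = m + 1 - (i + 1) := by omega
      rw [hT]; simp only []; rw [this]
    have e2 : ∀ i ∈ range (m + 1),
        (m.choose i : ℂ) * (iteratedDeriv i f z * iteratedDeriv (m - i + 1) g z)
          = (m.choose i : ℂ) * T i := by
      intro i hi
      have : m - i + 1 = m + 1 - i := by simp at hi; omega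
      rw [hT]; simp only []; rw [this]
    rw [Finset.sum_congr rfl e1, Finset.sum_congr rfl e2]
    have target : ∑ i ∈ range (m + 1 + 1), ((m+1).choose i : ℂ) * T i
        = ∑ i ∈ range (m + 1), (m.choose i : ℂ) * T (i + 1)
          + ∑ i ∈ range (m + 1), (m.choose i : ℂ) * T i := by
      rw [Finset.sum_range_succ' (fun i => ((m+1).choose i : ℂ) * T i)]
      have : ∀ i ∈ range (m + 1), ((m+1).choose (i+1) : ℂ) * T (i+1)
          = (m.choose i : ℂ) * T (i+1) + (m.choose (i+1) : ℂ) * T (i+1) := by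
        intro i _
        rw [Nat.choose_succ_succ]
        push_cast
        ring
      rw [Finset.sum_congr rfl this, Finset.sum_add_distrib]
      have : ∑ i ∈ range (m + 1), (m.choose (i+1) : ℂ) * T (i+1) + ((m+1).choose 0 : ℂ) * T 0
          = ∑ i ∈ range (m + 1), (m.choose i : ℂ) * T i := by
        rw [show ((m+1).choose 0 : ℂ) = ((m).choose 0 : ℂ) by simp,
          ← Finset.sum_range_succ' (fun i => (m.choose i : ℂ) * T i)]
        rw [Finset.sum_range_succ]
        simp
      rw [add_assoc, this]
    rw [target]

/-- Box [0,N)² sum equals triangle sum, given suitable vanishing. -/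
lemma sum_box_eq_sum_triangle {M : Type*} [AddCommMonoid M] (N K : ℕ) (F : ℕ → ℕ → M)
    (h1 : ∀ j i, N ≤ j → F j i = 0) (h2 : ∀ j i, N ≤ i → F j i = 0)
    (h0 : ∀ j i, K ≤ j + i → F j i = 0) :
    ∑ j ∈ range N, ∑ i ∈ range N, F j i
      = ∑ s ∈ range K, ∑ j ∈ range (s + 1), F j (s - j) := by
  set R := N + K with hR
  have hbox : ∑ j ∈ range N, ∑ i ∈ range N, F j i
      = ∑ p ∈ range R ×ˢ range R, F p.1 p.2 := by
    rw [← Finset.sum_product']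
    apply Finset.sum_subset
    · exact Finset.product_subset_product (range_subset_range.2 (by omega)) (range_subset_range.2 (by omega))
    · intro p _ hp
      simp only [Finset.mem_product, Finset.mem_range] at hp
      by_cases hj : p.1 < N
      · by_cases hi : p.2 < N
        · exact absurd ⟨hj, hi⟩ hp
        · exact h2 _ _ (by omega)
      · exact h1 _ _ (by omega)
  have htri : ∑ s ∈ range K, ∑ j ∈ range (s + 1), F j (s - j)
      = ∑ p ∈ (range R ×ˢ range R).filter (fun p => p.1 + p.2 < K), F p.1 p.2 := by
    rw [Finset.sum_sigma']
    refine Finset.sum_nbij' (fun x => (x.2, x.1 - x.2)) (fun p => ⟨p.1 + p.2, p.1⟩)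
      ?_ ?_ ?_ ?_ ?_
    · intro x hx
      simp only [Finset.mem_sigma, Finset.mem_range] at hx
      simp only [Finset.mem_filter, Finset.mem_product, Finset.mem_range]
      omega
    · intro p hp
      simp only [Finset.mem_filter, Finset.mem_product, Finset.mem_range] at hp
      simp only [Finset.mem_sigma, Finset.mem_range]
      omega
    · intro x hx
      simp only [Finset.mem_sigma, Finset.mem_range] at hx
      ext <;> simp <;> omega
    · intro p hp
      simp
    · intro x hx
      rfl
  rw [hbox, htri]
  symm
  apply Finset.sum_subset (Finset.filter_subset _ _)
  intro p hpm hp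
  simp only [Finset.mem_filter, not_and, not_lt] at hp
  have hK := hp hpm
  exact h0 _ _ (by omega)

lemma mixed_pow_eq_zero {A : Type*} [Ring A] [Algebra ℂ A] {M₁ M₂ : A} (hc : Commute M₁ M₂)
    {ν₁ ν₂ : ℕ} (hm1 : M₁ ^ ν₁ = 0) (hm2 : M₂ ^ ν₂ = 0) (a b : ℂ) :
    (a • M₁ + b • M₂) ^ (ν₁ + ν₂) = 0 := by
  have hcc : Commute (a • M₁) (b • M₂) := (hc.smul_left a).smul_right b
  rw [hcc.add_pow]
  apply Finset.sum_eq_zero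
  intro k hk
  simp only [Finset.mem_range] at hk
  rcases le_or_gt ν₁ k with h | h
  · have : (a • M₁) ^ k = 0 := by
      rw [smul_pow]; rw [pow_eq_zero_of_le h hm1, smul_zero]
    rw [this, zero_mul, zero_mul]
  · have : (b • M₂) ^ (ν₁ + ν₂ - k) = 0 := by
      rw [smul_pow]; rw [pow_eq_zero_of_le (by omega) hm2, smul_zero]
    rw [this, mul_zero, zero_mul]

/-- Vandermonde-type resummation for commuting nilpotents. -/
lemma vandermonde_sum' {A : Type*} [Ring A] [Algebra ℂ A] {x y : A} (hxy : Commute x y) {N : ℕ}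
    (hx : x ^ N = 0) (hy : y ^ N = 0) (w : ℕ → ℂ) :
    ∑ j ∈ range N, ∑ i ∈ range N,
        (w (j + i) / ((j.factorial : ℂ) * (i.factorial : ℂ))) • (x ^ j * y ^ i)
      = ∑ s ∈ range (2 * N), (w s / (s.factorial : ℂ)) • (x + y) ^ s := by
  rw [sum_box_eq_sum_triangle N (2 * N)
    (fun j i => (w (j + i) / ((j.factorial : ℂ) * (i.factorial : ℂ))) • (x ^ j * y ^ i))
    (fun j i hj => by rw [pow_eq_zero_of_le hj hx, zero_mul, smul_zero])
    (fun j i hi => by rw [pow_eq_zero_of_le hi hy, mul_zero, smul_zero])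
    (fun j i hji => by
      rcases (by omega : N ≤ j ∨ N ≤ i) with h | h
      · rw [pow_eq_zero_of_le h hx, zero_mul, smul_zero]
      · rw [pow_eq_zero_of_le h hy, mul_zero, smul_zero])]
  apply Finset.sum_congr rfl
  intro s _
  rw [hxy.add_pow, Finset.smul_sum]
  apply Finset.sum_congr rfl
  intro j hj
  simp only [Finset.mem_range] at hj
  have hj' : j ≤ s := by omega
  have hfac : ((s.choose j : ℂ)) * (j.factorial : ℂ) * ((s - j).factorial : ℂ)
      = (s.factorial : ℂ) := by
    exact_mod_cast congrArg (Nat.cast : ℕ → ℂ) (Nat.choose_mul_factorial_mul_factorial hj')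
  have hj0 : ((j.factorial : ℂ)) ≠ 0 := Nat.cast_ne_zero.2 (Nat.factorial_ne_zero j)
  have hsj0 : (((s - j).factorial : ℂ)) ≠ 0 := Nat.cast_ne_zero.2 (Nat.factorial_ne_zero _)
  have hs0 : ((s.factorial : ℂ)) ≠ 0 := Nat.cast_ne_zero.2 (Nat.factorial_ne_zero s)
  have hadd : j + (s - j) = s := by omega
  rw [hadd]
  have : x ^ j * y ^ (s - j) * (s.choose j : A) = (s.choose j : ℂ) • (x ^ j * y ^ (s - j)) := by
    rw [Nat.cast_smul_eq_nsmul, nsmul_eq_mul]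
    exact ((Nat.cast_commute (s.choose j) (x ^ j * y ^ (s - j))).eq).symm
  rw [this, smul_smul]
  congr 1
  rw [div_mul_eq_mul_div, div_eq_div_iff (mul_ne_zero hj0 hsj0) hs0]
  linear_combination (-(w s)) * hfac

lemma key_identity {A : Type*} [Ring A] [Algebra ℂ A] {a b zz : A} {N : ℕ}
    (haz : Commute a zz) (hbz : Commute b zz)
    (ha : a ^ N = 0) (hb : b ^ N = 0) (hz : zz ^ N = 0)
    (hP : (a + zz) ^ N = 0) (hQ : (b + zz) ^ N = 0)
    (u v : ℕ → ℂ) :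
    (∑ j ∈ range N, (u j / (j.factorial : ℂ)) • (a + zz) ^ j) *
      (∑ k ∈ range N, (v k / (k.factorial : ℂ)) • (b + zz) ^ k)
      = ∑ m ∈ range N, ((1 : ℂ) / (m.factorial : ℂ)) •
          ((∑ j ∈ range N, ∑ k ∈ range N,
            ((∑ i ∈ range (m + 1), (m.choose i : ℂ) * (u (j + i) * v (k + (m - i)))) /
              ((j.factorial : ℂ) * (k.factorial : ℂ))) • (a ^ j * b ^ k)) * zz ^ m) := by
  have hmul : ∀ j i k l : ℕ, (a ^ j * zz ^ i) * (b ^ k * zz ^ l)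
      = a ^ j * b ^ k * zz ^ (i + l) := by
    intro j i k l
    have hc : zz ^ i * b ^ k = b ^ k * zz ^ i := ((hbz.pow_pow k i).eq).symm
    calc (a ^ j * zz ^ i) * (b ^ k * zz ^ l)
        = a ^ j * ((zz ^ i * b ^ k) * zz ^ l) := by rw [mul_assoc, ← mul_assoc (zz ^ i)]
      _ = a ^ j * (b ^ k * (zz ^ i * zz ^ l)) := by rw [hc, mul_assoc]
      _ = a ^ j * b ^ k * zz ^ (i + l) := by rw [← pow_add, ← mul_assoc]
  have keyL : (∑ j ∈ range N, (u j / (j.factorial : ℂ)) • (a + zz) ^ j) *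
      (∑ k ∈ range N, (v k / (k.factorial : ℂ)) • (b + zz) ^ k)
      = ∑ j ∈ range N, ∑ i ∈ range N, ∑ k ∈ range N, ∑ l ∈ range N,
          ((u (j + i) / ((j.factorial : ℂ) * (i.factorial : ℂ))) *
            (v (k + l) / ((k.factorial : ℂ) * (l.factorial : ℂ)))) •
            (a ^ j * b ^ k * zz ^ (i + l)) := by
    have e1 : (∑ j ∈ range N, (u j / (j.factorial : ℂ)) • (a + zz) ^ j)
        = ∑ j ∈ range (2 * N), (u j / (j.factorial : ℂ)) • (a + zz) ^ j := by
      apply Finset.sum_subset (range_subset_range.2 (by omega))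
      intro s _ hs
      simp only [mem_range, not_lt] at hs
      rw [pow_eq_zero_of_le (by omega) hP, smul_zero]
    have e2 : (∑ k ∈ range N, (v k / (k.factorial : ℂ)) • (b + zz) ^ k)
        = ∑ k ∈ range (2 * N), (v k / (k.factorial : ℂ)) • (b + zz) ^ k := by
      apply Finset.sum_subset (range_subset_range.2 (by omega))
      intro s _ hs
      simp only [mem_range, not_lt] at hs
      rw [pow_eq_zero_of_le (by omega) hQ, smul_zero]
    rw [e1, e2, ← vandermonde_sum' haz ha hz u, ← vandermonde_sum' hbz hb hz v]
    simp only [Finset.sum_mul]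
    simp only [Finset.mul_sum]
    simp only [smul_mul_smul_comm, hmul]
  rw [keyL]
  have keyR : ∀ m ∈ range N, ((1 : ℂ) / (m.factorial : ℂ)) •
          ((∑ j ∈ range N, ∑ k ∈ range N,
            ((∑ i ∈ range (m + 1), (m.choose i : ℂ) * (u (j + i) * v (k + (m - i)))) /
              ((j.factorial : ℂ) * (k.factorial : ℂ))) • (a ^ j * b ^ k)) * zz ^ m)
      = ∑ j ∈ range N, ∑ k ∈ range N, ∑ i ∈ range (m + 1),
          (((1 : ℂ) / (m.factorial : ℂ)) *
            ((m.choose i : ℂ) * (u (j + i) * v (k + (m - i))) /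
              ((j.factorial : ℂ) * (k.factorial : ℂ)))) • (a ^ j * b ^ k * zz ^ m) := by
    intro m _
    simp only [Finset.sum_mul, Finset.smul_sum, smul_mul_assoc, Finset.sum_div,
      Finset.sum_smul, smul_smul, Finset.mul_sum]
  rw [Finset.sum_congr rfl keyR]
  conv_rhs => rw [Finset.sum_comm]
  refine Finset.sum_congr rfl fun j hj => ?_
  conv_rhs => rw [Finset.sum_comm]
  conv_lhs => rw [Finset.sum_comm]
  refine Finset.sum_congr rfl fun k hk => ?_
  refine (sum_box_eq_sum_triangle N N
      (fun i l => ((u (j + i) / ((j.factorial : ℂ) * (i.factorial : ℂ))) *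
            (v (k + l) / ((k.factorial : ℂ) * (l.factorial : ℂ)))) •
            (a ^ j * b ^ k * zz ^ (i + l)))
      (fun i l hNi => by
        rw [pow_eq_zero_of_le (by omega : N ≤ i + l) hz, mul_zero, smul_zero])
      (fun i l hNl => by
        rw [pow_eq_zero_of_le (by omega : N ≤ i + l) hz, mul_zero, smul_zero])
      (fun i l hNil => by
        rw [pow_eq_zero_of_le (by omega : N ≤ i + l) hz, mul_zero, smul_zero])).trans ?_
  refine Finset.sum_congr rfl fun m hm => ?_
  refine Finset.sum_congr rfl fun i hi => ?_
  simp only [mem_range] at hi hm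
  have him : i ≤ m := by omega
  have hadd : i + (m - i) = m := by omega
  rw [hadd]
  congr 1
  have hfac : ((m.choose i : ℂ)) * (i.factorial : ℂ) * ((m - i).factorial : ℂ)
      = (m.factorial : ℂ) := by
    exact_mod_cast congrArg (Nat.cast : ℕ → ℂ) (Nat.choose_mul_factorial_mul_factorial him)
  have hi0 : ((i.factorial : ℂ)) ≠ 0 := Nat.cast_ne_zero.2 (Nat.factorial_ne_zero i)
  have hmi0 : (((m - i).factorial : ℂ)) ≠ 0 := Nat.cast_ne_zero.2 (Nat.factorial_ne_zero _)
  have hm0 : ((m.factorial : ℂ)) ≠ 0 := Nat.cast_ne_zero.2 (Nat.factorial_ne_zero m)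
  have hj0 : ((j.factorial : ℂ)) ≠ 0 := Nat.cast_ne_zero.2 (Nat.factorial_ne_zero j)
  have hk0 : ((k.factorial : ℂ)) ≠ 0 := Nat.cast_ne_zero.2 (Nat.factorial_ne_zero k)
  field_simp
  ring_nf
  linear_combination (-1 * u (j + i) * v (k + (m - i))) * hfac

lemma DopA_iter_sum {A : Type*} [NormedRing A] [NormedAlgebra ℂ A] {ι : Type*} (s : Finset ι)
    (h : ι → ℂ → ℂ) (hh : ∀ i ∈ s, Differentiable ℂ (h i)) (C : ι → A) (m : ℕ) :
    DopA^[m] (fun w => ∑ i ∈ s, h i w • C i)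
      = fun z => ∑ i ∈ s,
          ((-(1 / (2 * (Real.pi : ℂ) * Complex.I))) ^ m * iteratedDeriv m (h i) z) • C i := by
  induction m with
  | zero => simp
  | succ m ih =>
    rw [Function.iterate_succ_apply', ih]
    funext z
    show (-(1 / (2 * (Real.pi : ℂ) * Complex.I))) • deriv _ z = _
    rw [deriv_fun_sum (fun i hi => show DifferentiableAt ℂ (fun y =>
        ((-(1 / (2 * (Real.pi : ℂ) * Complex.I))) ^ m * iteratedDeriv m (h i) y) • C i) z from
      (((entire_iteratedDeriv (hh i hi) m).const_mul _).smul_const (C i)).differentiableAt)]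
    rw [Finset.smul_sum]
    refine Finset.sum_congr rfl fun i hi => ?_
    rw [deriv_smul_const (((entire_iteratedDeriv (hh i hi) m).const_mul _).differentiableAt),
      deriv_const_mul _ ((entire_iteratedDeriv (hh i hi) m).differentiableAt),
      ← iteratedDeriv_succ, smul_smul]
    ring_nf

lemma sum_smul_factor {A : Type*} [Ring A] [Algebra ℂ A] {ι : Type*} (s : Finset ι)
    (γ : ℂ) (t δ : ι → ℂ) (X : ι → A) :
    ∑ p ∈ s, (γ * t p) • (δ p • X p) = γ • ∑ p ∈ s, (t p * δ p) • X p := by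
  rw [Finset.smul_sum]
  refine Finset.sum_congr rfl fun p _ => ?_
  rw [smul_smul, smul_smul]
  ring_nf

lemma tsum_eq_range_sum {A : Type*} [AddCommGroup A] [TopologicalSpace A]
    [IsTopologicalAddGroup A] [T2Space A] (f : ℕ → A) (N : ℕ) (h : ∀ k, N ≤ k → f k = 0) :
    ∑' k, f k = ∑ k ∈ range N, f k :=
  tsum_eq_sum (fun k hk => h k (by simpa using hk))

end Helpers

/-- Composition rule for sections with nilpotents (Proposition 3): with `M₁ = N₁⊗1`,
`M₂ = 1⊗N₂` acting on `V₁⊗V₂` (realized via Kronecker products of matrices),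
`exp(DM₁/n₁)f₁ · exp(DM₂/n₂)f₂
 = exp(D(M₁+M₂)/(n₁+n₂))[f₁(z + (n₁M₂−n₂M₁)/(2πi n₁(n₁+n₂)))·f₂(z + (n₂M₁−n₁M₂)/(2πi n₂(n₁+n₂)))]`. -/
theorem composition_with_nilpotents (d₁ d₂ : ℕ)
    (N₁ : Matrix (Fin d₁) (Fin d₁) ℂ) (N₂ : Matrix (Fin d₂) (Fin d₂) ℂ)
    (hN₁ : IsNilpotent N₁) (hN₂ : IsNilpotent N₂)
    (n₁ n₂ : ℕ) (hn₁ : 0 < n₁) (hn₂ : 0 < n₂)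
    (f₁ f₂ : ℂ → ℂ) (hf₁ : Differentiable ℂ f₁) (hf₂ : Differentiable ℂ f₂) :
    ∀ z : ℂ,
      expD (n₁ : ℂ) (N₁ ⊗ₖ (1 : Matrix (Fin d₂) (Fin d₂) ℂ))
          (fun w => (f₁ w) • (1 : Matrix (Fin d₁ × Fin d₂) (Fin d₁ × Fin d₂) ℂ)) z *
        expD (n₂ : ℂ) ((1 : Matrix (Fin d₁) (Fin d₁) ℂ) ⊗ₖ N₂)
          (fun w => (f₂ w) • (1 : Matrix (Fin d₁ × Fin d₂) (Fin d₁ × Fin d₂) ℂ)) z =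
      expD ((n₁ : ℂ) + n₂)
          (N₁ ⊗ₖ (1 : Matrix (Fin d₂) (Fin d₂) ℂ) + (1 : Matrix (Fin d₁) (Fin d₁) ℂ) ⊗ₖ N₂)
          (fun w =>
            shiftF f₁ ((2 * (Real.pi : ℂ) * Complex.I * n₁ * ((n₁ : ℂ) + n₂))⁻¹ •
                ((n₁ : ℂ) • ((1 : Matrix (Fin d₁) (Fin d₁) ℂ) ⊗ₖ N₂) -
                 (n₂ : ℂ) • (N₁ ⊗ₖ (1 : Matrix (Fin d₂) (Fin d₂) ℂ)))) w *
            shiftF f₂ ((2 * (Real.pi : ℂ) * Complex.I * n₂ * ((n₁ : ℂ) + n₂))⁻¹ •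
                ((n₂ : ℂ) • (N₁ ⊗ₖ (1 : Matrix (Fin d₂) (Fin d₂) ℂ)) -
                 (n₁ : ℂ) • ((1 : Matrix (Fin d₁) (Fin d₁) ℂ) ⊗ₖ N₂))) w) z := by
  intro z
  classical
  obtain ⟨ν₁, hv1⟩ := hN₁
  obtain ⟨ν₂, hv2⟩ := hN₂
  set M₁ : Matrix (Fin d₁ × Fin d₂) (Fin d₁ × Fin d₂) ℂ := N₁ ⊗ₖ 1 with hM₁def
  set M₂ : Matrix (Fin d₁ × Fin d₂) (Fin d₁ × Fin d₂) ℂ := (1 : Matrix (Fin d₁) (Fin d₁) ℂ) ⊗ₖ N₂ with hM₂def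
  have hpow1 : ∀ k : ℕ, M₁ ^ k = (N₁ ^ k) ⊗ₖ (1 : Matrix (Fin d₂) (Fin d₂) ℂ) := by
    intro k; induction k with
    | zero => simp [hM₁def, Matrix.one_kronecker_one]
    | succ k ih => rw [pow_succ, ih, hM₁def, ← Matrix.mul_kronecker_mul, mul_one, ← pow_succ]
  have hpow2 : ∀ k : ℕ, M₂ ^ k = (1 : Matrix (Fin d₁) (Fin d₁) ℂ) ⊗ₖ (N₂ ^ k) := by
    intro k; induction k with
    | zero => simp [hM₂def, Matrix.one_kronecker_one]
    | succ k ih => rw [pow_succ, ih, hM₂def, ← Matrix.mul_kronecker_mul, mul_one, ← pow_succ]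
  have hm1 : M₁ ^ ν₁ = 0 := by rw [hpow1, hv1, Matrix.zero_kronecker]
  have hm2 : M₂ ^ ν₂ = 0 := by rw [hpow2, hv2, Matrix.kronecker_zero]
  have hcomm : Commute M₁ M₂ := by
    show M₁ * M₂ = M₂ * M₁
    rw [hM₁def, hM₂def, ← Matrix.mul_kronecker_mul, ← Matrix.mul_kronecker_mul]
    simp only [one_mul, mul_one]
  set N : ℕ := ν₁ + ν₂ with hNdef
  have hmix : ∀ α β : ℂ, (α • M₁ + β • M₂) ^ N = 0 := fun α β =>
    mixed_pow_eq_zero hcomm hm1 hm2 α β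
  have hm1N : M₁ ^ N = 0 := pow_eq_zero_of_le (Nat.le_add_right _ _) hm1
  have hm2N : M₂ ^ N = 0 := pow_eq_zero_of_le (Nat.le_add_left _ _) hm2
  have hMsum0 : (M₁ + M₂) ^ N = 0 := by
    have := hmix 1 1; simpa using this
  have hpi0 : (2 * (Real.pi : ℂ) * Complex.I) ≠ 0 := by
    refine mul_ne_zero (mul_ne_zero two_ne_zero ?_) Complex.I_ne_zero
    exact_mod_cast Complex.ofReal_ne_zero.2 Real.pi_ne_zero
  set c : ℂ := -(1 / (2 * (Real.pi : ℂ) * Complex.I)) with hcdef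
  have hc0 : c ≠ 0 := by
    rw [hcdef]
    exact neg_ne_zero.2 (div_ne_zero one_ne_zero hpi0)
  have hn1 : (n₁ : ℂ) ≠ 0 := Nat.cast_ne_zero.2 hn₁.ne'
  have hn2 : (n₂ : ℂ) ≠ 0 := Nat.cast_ne_zero.2 hn₂.ne'
  have hnn : ((n₁ : ℂ) + n₂) ≠ 0 := by
    have : ((n₁ : ℂ) + n₂) = ((n₁ + n₂ : ℕ) : ℂ) := by push_cast; ring
    rw [this]
    exact Nat.cast_ne_zero.2 (by omega)
  set TA : Matrix (Fin d₁ × Fin d₂) (Fin d₁ × Fin d₂) ℂ :=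
    (2 * (Real.pi : ℂ) * Complex.I * n₁ * ((n₁ : ℂ) + n₂))⁻¹ •
      ((n₁ : ℂ) • M₂ - (n₂ : ℂ) • M₁) with hTAdef
  set TB : Matrix (Fin d₁ × Fin d₂) (Fin d₁ × Fin d₂) ℂ :=
    (2 * (Real.pi : ℂ) * Complex.I * n₂ * ((n₁ : ℂ) + n₂))⁻¹ •
      ((n₂ : ℂ) • M₁ - (n₁ : ℂ) • M₂) with hTBdef
  have hTAform : TA = (-((2 * (Real.pi : ℂ) * Complex.I * n₁ * ((n₁ : ℂ) + n₂))⁻¹ * n₂)) • M₁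
      + ((2 * (Real.pi : ℂ) * Complex.I * n₁ * ((n₁ : ℂ) + n₂))⁻¹ * n₁) • M₂ := by
    rw [hTAdef]; module
  have hTBform : TB = ((2 * (Real.pi : ℂ) * Complex.I * n₂ * ((n₁ : ℂ) + n₂))⁻¹ * n₂) • M₁
      + (-((2 * (Real.pi : ℂ) * Complex.I * n₂ * ((n₁ : ℂ) + n₂))⁻¹ * n₁)) • M₂ := by
    rw [hTBdef]; module
  have hTA0 : TA ^ N = 0 := by rw [hTAform]; exact hmix _ _
  have hTB0 : TB ^ N = 0 := by rw [hTBform]; exact hmix _ _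
  set Z : Matrix (Fin d₁ × Fin d₂) (Fin d₁ × Fin d₂) ℂ :=
    (c / ((n₁ : ℂ) + n₂)) • (M₁ + M₂) with hZdef
  have hZform : Z = (c / ((n₁ : ℂ) + n₂)) • M₁ + (c / ((n₁ : ℂ) + n₂)) • M₂ := by
    rw [hZdef, smul_add]
  have hZ0 : Z ^ N = 0 := by rw [hZform]; exact hmix _ _
  set P : Matrix (Fin d₁ × Fin d₂) (Fin d₁ × Fin d₂) ℂ := (c / n₁) • M₁ with hPdef
  set Q : Matrix (Fin d₁ × Fin d₂) (Fin d₁ × Fin d₂) ℂ := (c / n₂) • M₂ with hQdef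
  have hP0 : P ^ N = 0 := by
    rw [hPdef, smul_pow, pow_eq_zero_of_le (Nat.le_add_right _ _) hm1, smul_zero]
  have hQ0 : Q ^ N = 0 := by
    rw [hQdef, smul_pow, pow_eq_zero_of_le (Nat.le_add_left _ _) hm2, smul_zero]
  have hPZ : TA + Z = P := by
    rw [hTAform, hZform, hPdef]
    have ca : -((2 * (Real.pi : ℂ) * Complex.I * n₁ * ((n₁ : ℂ) + n₂))⁻¹ * n₂)
        + c / ((n₁ : ℂ) + n₂) = c / n₁ := by
      rw [hcdef]; field_simp; ring
    have cb : (2 * (Real.pi : ℂ) * Complex.I * n₁ * ((n₁ : ℂ) + n₂))⁻¹ * n₁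
        + c / ((n₁ : ℂ) + n₂) = 0 := by
      rw [hcdef]; field_simp; ring
    calc (-((2 * (Real.pi : ℂ) * Complex.I * n₁ * ((n₁ : ℂ) + n₂))⁻¹ * n₂)) • M₁
          + ((2 * (Real.pi : ℂ) * Complex.I * n₁ * ((n₁ : ℂ) + n₂))⁻¹ * n₁) • M₂
          + ((c / ((n₁ : ℂ) + n₂)) • M₁ + (c / ((n₁ : ℂ) + n₂)) • M₂)
        = (-((2 * (Real.pi : ℂ) * Complex.I * n₁ * ((n₁ : ℂ) + n₂))⁻¹ * n₂)
            + c / ((n₁ : ℂ) + n₂)) • M₁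
          + ((2 * (Real.pi : ℂ) * Complex.I * n₁ * ((n₁ : ℂ) + n₂))⁻¹ * n₁
            + c / ((n₁ : ℂ) + n₂)) • M₂ := by module
      _ = (c / n₁) • M₁ := by rw [ca, cb, zero_smul, add_zero]
  have hQZ : TB + Z = Q := by
    rw [hTBform, hZform, hQdef]
    have ca : (2 * (Real.pi : ℂ) * Complex.I * n₂ * ((n₁ : ℂ) + n₂))⁻¹ * n₂
        + c / ((n₁ : ℂ) + n₂) = 0 := by
      rw [hcdef]; field_simp; ring
    have cb : -((2 * (Real.pi : ℂ) * Complex.I * n₂ * ((n₁ : ℂ) + n₂))⁻¹ * n₁)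
        + c / ((n₁ : ℂ) + n₂) = c / n₂ := by
      rw [hcdef]; field_simp; ring
    calc ((2 * (Real.pi : ℂ) * Complex.I * n₂ * ((n₁ : ℂ) + n₂))⁻¹ * n₂) • M₁
          + (-((2 * (Real.pi : ℂ) * Complex.I * n₂ * ((n₁ : ℂ) + n₂))⁻¹ * n₁)) • M₂
          + ((c / ((n₁ : ℂ) + n₂)) • M₁ + (c / ((n₁ : ℂ) + n₂)) • M₂)
        = ((2 * (Real.pi : ℂ) * Complex.I * n₂ * ((n₁ : ℂ) + n₂))⁻¹ * n₂
            + c / ((n₁ : ℂ) + n₂)) • M₁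
          + (-((2 * (Real.pi : ℂ) * Complex.I * n₂ * ((n₁ : ℂ) + n₂))⁻¹ * n₁)
            + c / ((n₁ : ℂ) + n₂)) • M₂ := by module
      _ = (c / n₂) • M₂ := by rw [ca, cb, zero_smul, zero_add]
  have expD_formula : ∀ (nn : ℂ) (M : Matrix (Fin d₁ × Fin d₂) (Fin d₁ × Fin d₂) ℂ)
      (f : ℂ → ℂ), Differentiable ℂ f → M ^ N = 0 →
      expD nn M (fun w => f w • 1) z
        = ∑ k ∈ Finset.range N,
            (iteratedDeriv k f z / (k.factorial : ℂ)) • ((c / nn) • M) ^ k := by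
    intro nn M f hf hMN
    unfold expD
    rw [tsum_eq_range_sum _ N (fun k hk => by
      rw [pow_eq_zero_of_le hk hMN, mul_zero, smul_zero])]
    refine Finset.sum_congr rfl fun k _ => ?_
    have hfn : (fun w => f w • (1 : Matrix (Fin d₁ × Fin d₂) (Fin d₁ × Fin d₂) ℂ))
        = fun w => ∑ i ∈ ({0} : Finset ℕ), f w • 1 := by simp
    rw [hfn, congrFun (DopA_iter_sum ({0} : Finset ℕ) (fun _ => f) (fun _ _ => hf)
      (fun _ => (1 : Matrix (Fin d₁ × Fin d₂) (Fin d₁ × Fin d₂) ℂ)) k) z]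
    rw [Finset.sum_singleton, smul_mul_assoc, one_mul, smul_smul, smul_pow, smul_smul,
      ← hcdef]
    congr 1
    rw [div_pow]
    rcases eq_or_ne nn 0 with h0 | h0
    · rcases Nat.eq_zero_or_pos k with hk0 | hk0
      · subst hk0; simp
      · rw [h0]
        simp [zero_pow (by omega : k ≠ 0)]
    · field_simp
  rw [expD_formula (n₁ : ℂ) M₁ f₁ hf₁ hm1N, expD_formula (n₂ : ℂ) M₂ f₂ hf₂ hm2N,
    ← hPdef, ← hQdef, ← hPZ, ← hQZ]
  have hGfun : (fun w => shiftF f₁ TA w * shiftF f₂ TB w)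
      = fun w => ∑ p ∈ Finset.range N ×ˢ Finset.range N,
          (iteratedDeriv p.1 f₁ w * iteratedDeriv p.2 f₂ w) •
            ((1 / ((p.1.factorial : ℂ) * (p.2.factorial : ℂ))) • (TA ^ p.1 * TB ^ p.2)) := by
    funext w
    unfold shiftF
    rw [tsum_eq_range_sum _ N (fun k hk => by
        rw [pow_eq_zero_of_le hk hTA0, smul_zero]),
      tsum_eq_range_sum _ N (fun k hk => by
        rw [pow_eq_zero_of_le hk hTB0, smul_zero]),
      Finset.sum_mul_sum, Finset.sum_product]
    refine Finset.sum_congr rfl fun j _ => Finset.sum_congr rfl fun k _ => ?_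
    rw [smul_mul_smul_comm, smul_smul]
    congr 1
    ring
  have hh : ∀ p ∈ Finset.range N ×ˢ Finset.range N,
      Differentiable ℂ ((fun p : ℕ × ℕ =>
        fun w => iteratedDeriv p.1 f₁ w * iteratedDeriv p.2 f₂ w) p) :=
    fun p _ => (entire_iteratedDeriv hf₁ p.1).mul (entire_iteratedDeriv hf₂ p.2)
  have hRHS : expD ((n₁ : ℂ) + n₂) (M₁ + M₂) (fun w => shiftF f₁ TA w * shiftF f₂ TB w) z
      = ∑ m ∈ Finset.range N, ((1 : ℂ) / ((m.factorial : ℂ) * ((n₁ : ℂ) + n₂) ^ m)) •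
          ((∑ p ∈ Finset.range N ×ˢ Finset.range N,
            (c ^ m * iteratedDeriv m
                (fun w => iteratedDeriv p.1 f₁ w * iteratedDeriv p.2 f₂ w) z) •
              ((1 / ((p.1.factorial : ℂ) * (p.2.factorial : ℂ))) • (TA ^ p.1 * TB ^ p.2)))
            * (M₁ + M₂) ^ m) := by
    unfold expD
    rw [tsum_eq_range_sum _ N (fun m hm => by
      rw [pow_eq_zero_of_le hm hMsum0, mul_zero, smul_zero])]
    refine Finset.sum_congr rfl fun m _ => ?_
    rw [hGfun, congrFun (DopA_iter_sum (Finset.range N ×ˢ Finset.range N)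
      (fun p : ℕ × ℕ => fun w => iteratedDeriv p.1 f₁ w * iteratedDeriv p.2 f₂ w) hh
      (fun p : ℕ × ℕ =>
        (1 / ((p.1.factorial : ℂ) * (p.2.factorial : ℂ))) • (TA ^ p.1 * TB ^ p.2)) m) z,
      ← hcdef]
  rw [hRHS]
  have hlin : ∀ α β γ δ : ℂ, Commute (α • M₁ + β • M₂) (γ • M₁ + δ • M₂) := by
    intro α β γ δ
    refine Commute.add_left (Commute.add_right ?_ ?_) (Commute.add_right ?_ ?_)
    · exact (((Commute.refl M₁).smul_left α).smul_right γ)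
    · exact ((hcomm.smul_left α).smul_right δ)
    · exact ((hcomm.symm.smul_left β).smul_right γ)
    · exact (((Commute.refl M₂).smul_left β).smul_right δ)
  have hCommTAZ : Commute TA Z := by
    rw [hTAform, hZform]; exact hlin _ _ _ _
  have hCommTBZ : Commute TB Z := by
    rw [hTBform, hZform]; exact hlin _ _ _ _
  refine (key_identity (N := N) hCommTAZ hCommTBZ hTA0 hTB0 hZ0
    (by rw [hPZ]; exact hP0) (by rw [hQZ]; exact hQ0)
    (fun a => iteratedDeriv a f₁ z) (fun a => iteratedDeriv a f₂ z)).trans ?_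
  refine Finset.sum_congr rfl fun m hm => ?_
  have hLeib : ∀ p : ℕ × ℕ,
      iteratedDeriv m (fun w => iteratedDeriv p.1 f₁ w * iteratedDeriv p.2 f₂ w) z
        = ∑ i ∈ Finset.range (m + 1),
            (m.choose i : ℂ) *
              (iteratedDeriv (p.1 + i) f₁ z * iteratedDeriv (p.2 + (m - i)) f₂ z) := by
    intro p
    rw [congrFun (leibniz_entire (entire_iteratedDeriv hf₁ p.1)
      (entire_iteratedDeriv hf₂ p.2) m) z]
    refine Finset.sum_congr rfl fun i _ => ?_
    rw [iteratedDeriv_iteratedDeriv', iteratedDeriv_iteratedDeriv',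
      Nat.add_comm i p.1, Nat.add_comm (m - i) p.2]
  conv_rhs => rw [sum_smul_factor, smul_mul_assoc, smul_smul]
  conv_lhs => rw [hZdef, smul_pow, mul_smul_comm, smul_smul]
  congr 1
  · rw [div_pow]
    field_simp
  · refine congrArg (fun S => S * (M₁ + M₂) ^ m) ?_
    rw [Finset.sum_product]
    refine Finset.sum_congr rfl fun j _ => Finset.sum_congr rfl fun k _ => ?_
    dsimp only
    rw [hLeib (j, k)]
    congr 1
    ring
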